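/- arXiv:2412.10394 — 5 statements merged into one kernel-verified Lean document; each statement's English description precedes it below -/
import Mathlib

section
/- For every positive integer n, the number of parking functions of length n equals (n+1)^{n-1}. -/
/-!
Pollak's circular argument. Read the entries of `β : Fin n → ZMod (n + 1)` as cars preferring
spots on a circle of `n + 1` spots. For each rotation `c`, the potential `∑ j, (β j - c).val`
satisfies `potential β (c + k) - potential β c = (n + 1) · #{j | (β j - c).val < k} - n k`, so
`β - c` is a (shifted) parking function exactly when `c` minimises the potential, and then the
minimum is strict.
Hence every orbit of the `n + 1` rotations contains exactly one parking function, and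
`(n + 1) · #PF_n = (n + 1) ^ n`.
-/

/-- A sequence `α : Fin n → ℕ` (with entries in `{1, …, n}`) is a parking function of
length `n` if for every `i ∈ {1, …, n}`, the number of indices `j` with `α j ≤ i`
is at least `i`. -/
def IsParkingFunction (n : ℕ) (α : Fin n → ℕ) : Prop :=
  (∀ j, α j ∈ Finset.Icc 1 n) ∧
    ∀ i ∈ Finset.Icc 1 n, i ≤ (Finset.univ.filter fun j => α j ≤ i).card

open Finset

theorem ZMod.val_sub_natCast_add {m : ℕ} [NeZero m] (y : ZMod m) {k : ℕ} (hk : k < m) :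
    (y - (k : ZMod m)).val + k = y.val + if y.val < k then m else 0 := by
  have hz : y - k + k = y := sub_add_cancel y k
  have hkv : (k : ZMod m).val = k := ZMod.val_natCast_of_lt hk
  have hlt := (y - k).val_lt
  rcases lt_or_ge ((y - k).val + k) m with h | h
  · have := ZMod.val_add_of_lt (a := y - (k : ZMod m)) (b := k) (by omega)
    rw [hz, hkv] at this
    split_ifs <;> omega
  · have := ZMod.val_add_val_of_le (a := y - (k : ZMod m)) (b := k) (by omega)
    rw [hz, hkv] at this
    split_ifs <;> omega

def potential {ι : Type*} [Fintype ι] {m : ℕ} (β : ι → ZMod m) (c : ZMod m) : ℕ :=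
  ∑ j, (β j - c).val

theorem potential_add_natCast {ι : Type*} [Fintype ι] {m : ℕ} [NeZero m] (β : ι → ZMod m)
    (c : ZMod m) {k : ℕ} (hk : k < m) :
    potential β (c + k) + Fintype.card ι * k =
      potential β c + m * #{j | (β j - c).val < k} := by
  have h := Finset.sum_congr rfl fun j (_ : j ∈ univ) => ZMod.val_sub_natCast_add (β j - c) hk
  simp only [sub_sub, Finset.sum_add_distrib, sum_const, card_univ, smul_eq_mul] at h
  rw [potential, potential, h, ← Finset.sum_filter, sum_const, smul_eq_mul, mul_comm]

theorem ZMod.exists_eq_add_natCast {m : ℕ} [NeZero m] {c c' : ZMod m} (h : c' ≠ c) :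
    ∃ k : ℕ, 0 < k ∧ k < m ∧ c' = c + k := by
  refine ⟨(c' - c).val, Nat.pos_of_ne_zero ?_, ZMod.val_lt _, by simp⟩
  rwa [ne_eq, ZMod.val_eq_zero, sub_eq_zero]

theorem card_subtype_mul_card_of_existsUnique_sub {ι A : Type*} [Finite ι] [AddGroup A]
    (P : (ι → A) → Prop) (h : ∀ β : ι → A, ∃! c, P fun j => β j - c) :
    Nat.card {v // P v} * Nat.card A = Nat.card A ^ Nat.card ι := by
  have hbij : Function.Bijective fun p : {v // P v} × A => fun j => p.1.1 j + p.2 := by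
    refine ⟨?_, fun β => ?_⟩
    · rintro ⟨⟨v, hv⟩, c⟩ ⟨⟨v', hv'⟩, c'⟩ heq
      have hshift (j) : v j + c = v' j + c' := congrFun heq j
      have hc : c = c' :=
        (h fun j => v j + c).unique (by simpa using hv) (by simpa [hshift] using hv')
      subst hc
      obtain rfl : v = v' := funext fun j => add_right_cancel (hshift j)
      rfl
    · obtain ⟨c, hc, -⟩ := h β
      exact ⟨(⟨_, hc⟩, c), by simp⟩
  rw [← Nat.card_prod, Nat.card_eq_of_bijective _ hbij, Nat.card_fun]

/-- Parking functions shifted down by one, with values read as residues mod `n + 1` so that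
they can be rotated. -/
def IsParkingZMod (n : ℕ) (v : Fin n → ZMod (n + 1)) : Prop :=
  ∀ k, 1 ≤ k → k ≤ n → k ≤ #{j | (v j).val < k}

theorem IsParkingZMod.val_lt {n : ℕ} {v : Fin n → ZMod (n + 1)} (hv : IsParkingZMod n v)
    (j : Fin n) : (v j).val < n := by
  have hall : #{j | (v j).val < n} = #(univ : Finset (Fin n)) :=
    le_antisymm (card_le_univ _) (by simpa using hv n j.pos le_rfl)
  simpa using filter_eq_self.1 (eq_of_subset_of_card_le (filter_subset _ _) hall.ge) j

theorem isParkingFunction_val_add_one_iff {n : ℕ} (v : Fin n → ZMod (n + 1)) :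
    IsParkingFunction n (fun j => (v j).val + 1) ↔ IsParkingZMod n v := by
  refine ⟨fun h k hk hkn => ?_, fun h => ⟨fun j => ?_, fun i hi => ?_⟩⟩
  · simpa only [Nat.add_one_le_iff] using h.2 k (mem_Icc.2 ⟨hk, hkn⟩)
  · exact mem_Icc.2 ⟨Nat.le_add_left _ _, h.val_lt j⟩
  · obtain ⟨hi, hin⟩ := mem_Icc.1 hi
    simpa only [Nat.add_one_le_iff] using h i hi hin

theorem card_isParkingFunction_eq (n : ℕ) :
    Nat.card {α // IsParkingFunction n α} =
      Nat.card {v : Fin n → ZMod (n + 1) // IsParkingZMod n v} := by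
  symm
  refine Nat.card_eq_of_bijective
    (fun v => ⟨fun j => (v.1 j).val + 1, (isParkingFunction_val_add_one_iff v.1).2 v.2⟩)
    ⟨?_, ?_⟩
  · intro v w h
    ext1
    funext j
    exact ZMod.val_injective _ (Nat.add_right_cancel (congrFun (congrArg Subtype.val h) j))
  · rintro ⟨α, hα⟩
    have hv : (fun j => (((α j - 1 : ℕ) : ZMod (n + 1))).val + 1) = α := by
      funext j
      have := mem_Icc.1 (hα.1 j)
      rw [ZMod.val_natCast_of_lt (by omega)]
      omega
    exact ⟨⟨_, (isParkingFunction_val_add_one_iff _).1 (by rwa [hv])⟩, Subtype.ext hv⟩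

section Shift

variable {n : ℕ} {β : Fin n → ZMod (n + 1)} {c : ZMod (n + 1)}

theorem potential_lt_of_isParkingZMod (hβ : IsParkingZMod n fun j => β j - c)
    {c' : ZMod (n + 1)} (hc : c' ≠ c) : potential β c < potential β c' := by
  obtain ⟨k, hk, hkn, rfl⟩ := ZMod.exists_eq_add_natCast hc
  have hsum := potential_add_natCast β c hkn
  have hcount := hβ k hk (by omega)
  rw [Fintype.card_fin] at hsum
  nlinarith

theorem isParkingZMod_of_potential_le (hc : ∀ c', potential β c ≤ potential β c') :
    IsParkingZMod n fun j => β j - c := by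
  intro k hk hkn
  have hsum := potential_add_natCast β c (k := k) (by omega)
  have hle := hc (c + k)
  rw [Fintype.card_fin] at hsum
  by_contra! hlt
  nlinarith

theorem existsUnique_isParkingZMod_sub (β : Fin n → ZMod (n + 1)) :
    ∃! c, IsParkingZMod n fun j => β j - c := by
  obtain ⟨c, -, hc⟩ := exists_min_image univ (potential β) univ_nonempty
  refine ⟨c, isParkingZMod_of_potential_le fun c' => hc c' (mem_univ c'), fun c' hc' => ?_⟩
  by_contra hne
  exact (potential_lt_of_isParkingZMod hc' (Ne.symm hne)).not_ge (hc c' (mem_univ c'))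

end Shift

theorem card_parkingFunctions_general (n : ℕ) :
    Nat.card {α : Fin n → ℕ // IsParkingFunction n α} = (n + 1) ^ (n - 1) := by
  have h := card_subtype_mul_card_of_existsUnique_sub _ (existsUnique_isParkingZMod_sub (n := n))
  rw [Nat.card_zmod, Nat.card_fin] at h
  rw [card_isParkingFunction_eq]
  cases n with
  | zero => simpa using h
  | succ n => rw [pow_succ] at h; exact Nat.eq_of_mul_eq_mul_right (by omega) h

/-- For every positive integer `n`, the number of parking functions of
length `n` equals `(n+1)^(n-1)`. -/
theorem card_parkingFunctions (n : ℕ) (hn : 0 < n) :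
    Nat.card {α : Fin n → ℕ // IsParkingFunction n α} = (n + 1) ^ (n - 1) :=
  card_parkingFunctions_general n
end

section
/- For every positive integer n and every function γ : {1, …, n} → ℤ/(n+1)ℤ, there is exactly one residue c ∈ ℤ/(n+1)ℤ such that the sequence α defined by letting α_j be the unique representative of γ_j − c lying in {1, …, n+1} is a parking function of length n (in particular, all α_j ≤ n). -/
/-- The unique representative of a residue `x ∈ ℤ/(n+1)ℤ` lying in `{1, …, n+1}`. -/
def repOneBased (n : ℕ) (x : ZMod (n + 1)) : ℕ :=
  if x.val = 0 then n + 1 else x.val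

/-!
Pollak's cycle argument. Let `excess γ x` be the number of cars preferring one of the spots
`1, …, x`, read modulo `n + 1`, minus `x`. Shifting by `c` turns the parking condition into:
the walk `excess γ` never drops below its value at `c.val` during the next `n` steps. One full
turn of the circle passes `n` cars and `n + 1` spots, so the walk loses exactly one per period,
and such a walk has exactly one admissible start in each period: its first minimum.
-/

open Finset

section CycleLemma

variable {n : ℕ} {P : ℕ → ℤ}

lemma eq_of_forall_le_add (hP : ∀ x, P (x + (n + 1)) = P x - 1) {a b : ℕ}
    (ha : a < n + 1) (hb : b < n + 1)
    (hPa : ∀ i ∈ Icc 1 n, P a ≤ P (a + i)) (hPb : ∀ i ∈ Icc 1 n, P b ≤ P (b + i)) :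
    a = b := by
  wlog hab : a < b generalizing a b
  · rcases (not_lt.1 hab).lt_or_eq with h | h
    · exact (this hb ha hPb hPa h).symm
    · exact h.symm
  -- Going from `a` to `b` and on to `a + (n + 1)` never descends, yet the walk drops by one.
  have hPab := hPa (b - a) (mem_Icc.2 ⟨by omega, by omega⟩)
  have hPba := hPb (n + 1 - (b - a)) (mem_Icc.2 ⟨by omega, by omega⟩)
  rw [Nat.add_sub_cancel' hab.le] at hPab
  rw [show b + (n + 1 - (b - a)) = a + (n + 1) by omega, hP] at hPba
  omega

lemma exists_forall_le_add (hP : ∀ x, P (x + (n + 1)) = P x - 1) :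
    ∃ a < n + 1, ∀ i ∈ Icc 1 n, P a ≤ P (a + i) := by
  obtain ⟨m, hm, hPm⟩ := (range (n + 1)).exists_min_image P nonempty_range_add_one
  have hex : ∃ a, a < n + 1 ∧ ∀ b < n + 1, P a ≤ P b :=
    ⟨m, mem_range.1 hm, fun b hb => hPm b (mem_range.2 hb)⟩
  -- The first minimiser on `[0, n]`: wrapping past `n` costs one, but earlier points are higher.
  obtain ⟨ha, hmin⟩ := Nat.find_spec hex
  refine ⟨Nat.find hex, ha, fun i hi => ?_⟩
  rcases lt_or_ge (Nat.find hex + i) (n + 1) with h | h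
  · exact hmin _ h
  · set r := Nat.find hex + i - (n + 1)
    have hr : r < Nat.find hex := by simp only [mem_Icc] at hi; omega
    have hlt : P (Nat.find hex) < P r := by
      have := Nat.find_min hex hr
      push Not at this
      obtain ⟨b, hb, hPb⟩ := this (by omega)
      exact (hmin b hb).trans_lt hPb
    rw [show Nat.find hex + i = r + (n + 1) by omega, hP]
    omega

theorem existsUnique_zmod_forall_le_add (hP : ∀ x, P (x + (n + 1)) = P x - 1) :
    ∃! c : ZMod (n + 1), ∀ i ∈ Icc 1 n, P c.val ≤ P (c.val + i) := by
  obtain ⟨a, ha, hPa⟩ := exists_forall_le_add hP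
  refine ⟨a, by simpa only [ZMod.val_natCast_of_lt ha] using hPa, fun c hc => ?_⟩
  rw [← ZMod.natCast_zmod_val c, eq_of_forall_le_add hP c.val_lt ha hc hPa]

end CycleLemma

lemma isParkingFunction_iff_of_one_le {n : ℕ} {α : Fin n → ℕ} (hα : ∀ j, 1 ≤ α j) :
    IsParkingFunction n α ↔ ∀ i ∈ Icc 1 n, i ≤ #{j | α j ≤ i} := by
  refine ⟨And.right, fun h => ⟨fun j => mem_Icc.2 ⟨hα j, ?_⟩, h⟩⟩
  have hall : (univ.filter fun j => α j ≤ n) = (univ : Finset (Fin n)) :=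
    eq_univ_of_card _ <| by
      rw [Fintype.card_fin]
      exact le_antisymm ((card_filter_le _ _).trans_eq (card_fin n))
        (h n (mem_Icc.2 ⟨j.pos, le_rfl⟩))
  exact (filter_eq_self.1 hall) j (mem_univ j)

lemma sum_Ioc_natCast_eq_sum_univ {n : ℕ} {M : Type*} [AddCommMonoid M]
    (g : ZMod (n + 1) → M) (x : ℕ) :
    ∑ t ∈ Ioc x (x + (n + 1)), g t = ∑ d, g d := by
  have hinj : Set.InjOn (Nat.cast : ℕ → ZMod (n + 1)) (Ioc x (x + (n + 1))) := by
    intro a ha b hb hab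
    simp only [coe_Ioc, Set.mem_Ioc] at ha hb
    refine ((ZMod.natCast_eq_natCast_iff a b _).1 hab).eq_of_abs_lt ?_
    rw [abs_sub_lt_iff]
    omega
  have himage : (Ioc x (x + (n + 1))).image (Nat.cast : ℕ → ZMod (n + 1)) = univ :=
    eq_univ_of_card _ (by rw [card_image_of_injOn hinj, Nat.card_Ioc, ZMod.card]; omega)
  rw [← himage, sum_image hinj]

lemma one_le_repOneBased {n : ℕ} (x : ZMod (n + 1)) : 1 ≤ repOneBased n x := by
  unfold repOneBased
  split_ifs <;> omega

lemma repOneBased_le_iff {n i : ℕ} {x : ZMod (n + 1)} (hi : i ≤ n) :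
    repOneBased n x ≤ i ↔ 0 < x.val ∧ x.val ≤ i := by
  unfold repOneBased
  split_ifs <;> omega

lemma add_val_sub_eq_iff {n t : ℕ} {c x : ZMod (n + 1)} (ht : c.val ≤ t)
    (ht' : t < c.val + (n + 1)) :
    c.val + (x - c).val = t ↔ x = t := by
  constructor
  · rintro rfl
    push_cast [ZMod.natCast_zmod_val]
    ring
  · rintro rfl
    have : (t : ZMod (n + 1)) - c = ((t - c.val : ℕ) : ZMod (n + 1)) := by
      rw [Nat.cast_sub ht, ZMod.natCast_zmod_val]
    rw [this, ZMod.val_natCast_of_lt (by omega)]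
    omega

namespace ParkingWalk

variable {n : ℕ} (γ : Fin n → ZMod (n + 1))

def load (d : ZMod (n + 1)) : ℕ := #{j | γ j = d}

def excess (x : ℕ) : ℤ := ∑ t ∈ Ioc 0 x, ((load γ t : ℤ) - 1)

lemma sum_load : ∑ d, load γ d = n := by
  simpa [load] using (card_eq_sum_card_fiberwise (f := γ) (s := univ) (t := univ)
    fun j _ => mem_univ (γ j)).symm

lemma excess_sub_excess {a b : ℕ} (hab : a ≤ b) :
    excess γ b - excess γ a = ∑ t ∈ Ioc a b, ((load γ t : ℤ) - 1) := by
  rw [excess, excess, ← sum_Ioc_consecutive _ (Nat.zero_le a) hab]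
  ring

lemma excess_add_period (x : ℕ) : excess γ (x + (n + 1)) = excess γ x - 1 := by
  have h := excess_sub_excess γ (Nat.le_add_right x (n + 1))
  rw [sum_sub_distrib, sum_Ioc_natCast_eq_sum_univ (fun d => (load γ d : ℤ)), ← Nat.cast_sum,
    sum_load, sum_const, Nat.card_Ioc, Nat.add_sub_cancel_left, nsmul_eq_mul, mul_one] at h
  push_cast at h
  omega

lemma card_repOneBased_sub_le (c : ZMod (n + 1)) {i : ℕ} (hi : i ≤ n) :
    #{j | repOneBased n (γ j - c) ≤ i} = ∑ t ∈ Ioc c.val (c.val + i), load γ t := by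
  have hfilter : univ.filter (fun j => repOneBased n (γ j - c) ≤ i)
      = univ.filter (fun j => c.val + (γ j - c).val ∈ Ioc c.val (c.val + i)) := by
    ext j
    simp only [mem_filter, mem_univ, true_and, mem_Ioc, repOneBased_le_iff hi]
    omega
  rw [hfilter, card_eq_sum_card_fiberwise (f := fun j => c.val + (γ j - c).val)
    (s := univ.filter fun j => c.val + (γ j - c).val ∈ Ioc c.val (c.val + i))
    (t := Ioc c.val (c.val + i)) fun j hj => (mem_filter.1 hj).2]
  refine sum_congr rfl fun t ht => congrArg card ?_
  obtain ⟨hct, htc⟩ := mem_Ioc.1 ht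
  ext j
  simp only [mem_filter, mem_univ, true_and,
    ← add_val_sub_eq_iff (x := γ j) hct.le (by omega : t < c.val + (n + 1))]
  exact ⟨And.right, fun h => ⟨h ▸ ht, h⟩⟩

lemma isParkingFunction_shift_iff (c : ZMod (n + 1)) :
    IsParkingFunction n (fun j => repOneBased n (γ j - c)) ↔
      ∀ i ∈ Icc 1 n, excess γ c.val ≤ excess γ (c.val + i) := by
  rw [isParkingFunction_iff_of_one_le fun j => one_le_repOneBased _]
  refine forall₂_congr fun i hi => ?_
  have hcount := card_repOneBased_sub_le γ c (mem_Icc.1 hi).2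
  have hexcess := excess_sub_excess γ (Nat.le_add_right c.val i)
  rw [sum_sub_distrib, ← Nat.cast_sum, ← hcount, sum_const, Nat.card_Ioc, Nat.add_sub_cancel_left,
    nsmul_eq_mul, mul_one] at hexcess
  rw [← Nat.cast_le (α := ℤ)]
  omega

end ParkingWalk

theorem existsUnique_shift_isParkingFunction_general (n : ℕ)
    (γ : Fin n → ZMod (n + 1)) :
    ∃! c : ZMod (n + 1),
      IsParkingFunction n (fun j => repOneBased n (γ j - c)) := by
  simp_rw [ParkingWalk.isParkingFunction_shift_iff]
  exact existsUnique_zmod_forall_le_add (ParkingWalk.excess_add_period γ)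

/-- For every positive integer `n` and every `γ : {1,…,n} → ℤ/(n+1)ℤ`,
there is exactly one residue `c` such that the sequence `α` defined by letting `α j` be
the representative of `γ j - c` in `{1, …, n+1}` is a parking function of length `n`. -/
theorem existsUnique_shift_isParkingFunction (n : ℕ) (hn : 0 < n)
    (γ : Fin n → ZMod (n + 1)) :
    ∃! c : ZMod (n + 1),
      IsParkingFunction n (fun j => repOneBased n (γ j - c)) :=
  existsUnique_shift_isParkingFunction_general n γ
end

section
/- Let n be a positive integer and let π_1 < π_2 < ⋯ < π_{n+1} be a maximal chain of NC_{n+1}, so that for each j ∈ {1, …, n} the partition π_{j+1} is obtained from π_j by merging two blocks A and B of π_j with min A < min B. Define α_j = max{ i ∈ A : i < min B }. Then the sequence α = (α_1, …, α_n) is a parking function of length n. -/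
/-- A collection of blocks `C` (a partition of `Fin m` in the sense of
`Setoid.IsPartition`) is noncrossing if there do not exist `a < b < c < d` with
`a, c` in one block and `b, d` in a different block. -/
def Noncrossing {m : ℕ} (C : Set (Set (Fin m))) : Prop :=
  ∀ B ∈ C, ∀ B' ∈ C, ∀ a b c d : Fin m,
    a < b → b < c → c < d → a ∈ B → c ∈ B → b ∈ B' → d ∈ B' → B = B'

theorem isParkingFunction_of_le_of_subset_range {n : ℕ} {α β : Fin n → ℕ}
    (hα : ∀ j, 1 ≤ α j) (hαβ : ∀ j, α j ≤ β j) (hβ : ∀ j, β j ≤ n)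
    (hrange : Set.Icc 1 n ⊆ Set.range β) : IsParkingFunction n α := by
  refine ⟨fun j => Finset.mem_Icc.2 ⟨hα j, (hαβ j).trans (hβ j)⟩, fun i hi => ?_⟩
  have hsurj : Set.SurjOn β (Finset.univ.filter fun j => β j ≤ i) (Finset.Icc 1 i) := by
    intro v hv
    simp only [Finset.coe_Icc, Set.mem_Icc, Finset.mem_Icc] at hv hi
    obtain ⟨j, rfl⟩ := hrange ⟨hv.1, hv.2.trans hi.2⟩
    exact ⟨j, by simpa using hv.2, rfl⟩
  calc i = (Finset.Icc 1 i).card := by simp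
    _ ≤ (Finset.univ.filter fun j => β j ≤ i).card := Finset.card_le_card_of_surjOn β hsurj
    _ ≤ (Finset.univ.filter fun j => α j ≤ i).card :=
      Finset.card_le_card <| Finset.monotone_filter_right _ fun j _ h => (hαβ j).trans h

theorem Fin.exists_castSucc_and_not_succ {n : ℕ} {p : Fin (n + 1) → Prop} (h0 : p 0)
    (hlast : ¬p (Fin.last n)) : ∃ j : Fin n, p j.castSucc ∧ ¬p j.succ := by
  by_contra! h
  exact hlast (Fin.induction h0 h (Fin.last n))

theorem Fin.apply_zero_eq_apply_last_add {n : ℕ} {f : Fin (n + 1) → ℕ}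
    (hf : ∀ j : Fin n, f j.succ + 1 = f j.castSucc) : f 0 = f (Fin.last n) + n := by
  suffices ∀ k : Fin (n + 1), f 0 = f k + k from this (Fin.last n)
  refine Fin.induction rfl fun j ih => ?_
  rw [ih, ← hf j]
  simp only [Fin.val_castSucc, Fin.val_succ]
  ring

open Set

variable {α : Type*}

def blockOf (P : Set (Set α)) (x : α) : Set α :=
  {y | ∃ B ∈ P, x ∈ B ∧ y ∈ B}

namespace Setoid.IsPartition

variable {P : Set (Set α)}

theorem blockOf_eq (hP : IsPartition P) {B : Set α} {x : α} (hB : B ∈ P) (hx : x ∈ B) :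
    blockOf P x = B := by
  ext y
  refine ⟨fun ⟨B', hB', hxB', hyB'⟩ => ?_, fun hy => ⟨B, hB, hx, hy⟩⟩
  rwa [eq_of_mem_eqv_class hP.2 hB' hxB' hB hx] at hyB'

theorem blockOf_mem (hP : IsPartition P) (x : α) : blockOf P x ∈ P := by
  obtain ⟨B, ⟨hB, hx⟩, -⟩ := hP.2 x
  rwa [hP.blockOf_eq hB hx]

theorem mem_blockOf_self (hP : IsPartition P) (x : α) : x ∈ blockOf P x := by
  obtain ⟨B, ⟨hB, hx⟩, -⟩ := hP.2 x
  exact ⟨B, hB, hx, hx⟩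

theorem range_blockOf (hP : IsPartition P) : range (blockOf P) = P := by
  refine Subset.antisymm (range_subset_iff.2 hP.blockOf_mem) fun B hB => ?_
  obtain ⟨x, hx⟩ := nonempty_of_mem_partition hP hB
  exact ⟨x, hP.blockOf_eq hB hx⟩

theorem ncard_le [Finite α] (hP : IsPartition P) : P.ncard ≤ Nat.card α := by
  rw [← hP.range_blockOf, ← image_univ, ← ncard_univ]
  exact ncard_image_le

theorem one_le_ncard [Finite α] [Nonempty α] (hP : IsPartition P) : 1 ≤ P.ncard :=
  (ncard_pos (toFinite P)).2 ⟨_, hP.blockOf_mem (Classical.arbitrary α)⟩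

theorem blockOf_eq_singleton [Finite α] (hP : IsPartition P) (hcard : P.ncard = Nat.card α)
    (x : α) : blockOf P x = {x} := by
  have hinj : (blockOf P).Injective := by
    rw [← injOn_univ]
    refine injOn_of_ncard_image_eq ?_
    rw [image_univ, hP.range_blockOf, hcard, ncard_univ]
  refine eq_singleton_iff_unique_mem.2 ⟨hP.mem_blockOf_self x, fun y hy => hinj ?_⟩
  exact hP.blockOf_eq (hP.blockOf_mem x) hy

theorem blockOf_eq_univ (hP : IsPartition P) (hcard : P.ncard = 1) (x : α) :
    blockOf P x = univ := by
  obtain ⟨T, rfl⟩ := ncard_eq_one.1 hcard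
  refine eq_univ_of_forall fun y => ?_
  rw [mem_singleton_iff.1 (hP.blockOf_mem x), ← mem_singleton_iff.1 (hP.blockOf_mem y)]
  exact hP.mem_blockOf_self y

end Setoid.IsPartition

structure IsMerge (P Q : Set (Set α)) (A B : Set α) : Prop where
  left_mem : A ∈ P
  right_mem : B ∈ P
  ne : A ≠ B
  eq : Q = (P \ {A, B}) ∪ {A ∪ B}

namespace IsMerge

variable {P Q : Set (Set α)} {A B : Set α}

theorem union_mem (h : IsMerge P Q A B) : A ∪ B ∈ Q := by
  rw [h.eq]
  exact Or.inr rfl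

theorem union_notMem (hP : Setoid.IsPartition P) (h : IsMerge P Q A B) : A ∪ B ∉ P := by
  intro hU
  obtain ⟨x, hx⟩ := Setoid.nonempty_of_mem_partition hP h.left_mem
  obtain ⟨y, hy⟩ := Setoid.nonempty_of_mem_partition hP h.right_mem
  have hUA : A ∪ B = A := Setoid.eq_of_mem_eqv_class hP.2 hU (Or.inl hx) h.left_mem hx
  have hUB : A ∪ B = B := Setoid.eq_of_mem_eqv_class hP.2 hU (Or.inr hy) h.right_mem hy
  exact h.ne (hUA.symm.trans hUB)

theorem ncard_add_one [Finite α] (hP : Setoid.IsPartition P) (h : IsMerge P Q A B) :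
    Q.ncard + 1 = P.ncard := by
  have hsub : ({A, B} : Set (Set α)) ⊆ P := pair_subset h.left_mem h.right_mem
  have htwo : 2 ≤ P.ncard := by
    simpa [ncard_pair h.ne] using ncard_le_ncard hsub
  rw [h.eq, union_singleton, ncard_insert_of_notMem fun hU => h.union_notMem hP hU.1,
    ncard_sdiff hsub, ncard_pair h.ne]
  omega

theorem blockOf_of_notMem (hP : Setoid.IsPartition P) (hQ : Setoid.IsPartition Q)
    (h : IsMerge P Q A B) {x : α} (hx : x ∉ A ∪ B) : blockOf Q x = blockOf P x := by
  have hxP := hP.mem_blockOf_self x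
  refine hQ.blockOf_eq ?_ hxP
  rw [h.eq]
  refine Or.inl ⟨hP.blockOf_mem x, ?_⟩
  rintro (hA | hB)
  · exact hx (Or.inl (hA ▸ hxP))
  · exact hx (Or.inr (hB ▸ hxP))

end IsMerge

section BlockMin

variable [ConditionallyCompleteLinearOrderBot α] {P Q : Set (Set α)}

noncomputable def blockMin (P : Set (Set α)) (x : α) : α :=
  sInf (blockOf P x)

theorem Setoid.IsPartition.blockMin_eq (hP : IsPartition P) {B : Set α} {x m : α} (hB : B ∈ P)
    (hx : x ∈ B) (hm : IsLeast B m) : blockMin P x = m := by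
  rw [blockMin, hP.blockOf_eq hB hx, hm.csInf_eq]

theorem Setoid.IsPartition.blockMin_eq_self [Finite α] (hP : IsPartition P)
    (hcard : P.ncard = Nat.card α) (x : α) : blockMin P x = x := by
  rw [blockMin, hP.blockOf_eq_singleton hcard, csInf_singleton]

theorem Setoid.IsPartition.blockMin_eq_bot (hP : IsPartition P) (hcard : P.ncard = 1) (x : α) :
    blockMin P x = ⊥ := by
  rw [blockMin, hP.blockOf_eq_univ hcard, csInf_univ]

theorem IsMerge.blockMin_eq_of_ne (hP : Setoid.IsPartition P) (hQ : Setoid.IsPartition Q)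
    {A B : Set α} {a b x : α} (h : IsMerge P Q A B) (ha : IsLeast A a) (hb : IsLeast B b)
    (hab : a ≤ b) (hx : blockMin Q x ≠ blockMin P x) : blockMin P x = b := by
  by_cases hxB : x ∈ B
  · exact hP.blockMin_eq h.right_mem hxB hb
  by_cases hxA : x ∈ A
  · have hU : IsLeast (A ∪ B) a := min_eq_left hab ▸ ha.union hb
    rw [hQ.blockMin_eq h.union_mem (Or.inl hxA) hU, hP.blockMin_eq h.left_mem hxA ha] at hx
    exact (hx rfl).elim
  · rw [blockMin, h.blockOf_of_notMem hP hQ (by simp [hxA, hxB])] at hx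
    exact (hx rfl).elim

end BlockMin

theorem exists_right_min_eq_of_ne_bot [ConditionallyCompleteLinearOrderBot α] [Finite α] {n : ℕ}
    (hcard : Nat.card α = n + 1) {π : Fin (n + 1) → Set (Set α)}
    (hπ : ∀ t, Setoid.IsPartition (π t)) {A B : Fin n → Set α}
    (hmerge : ∀ j, IsMerge (π j.castSucc) (π j.succ) (A j) (B j)) {a b : Fin n → α}
    (ha : ∀ j, IsLeast (A j) (a j)) (hb : ∀ j, IsLeast (B j) (b j)) (hab : ∀ j, a j ≤ b j)
    {x : α} (hx : x ≠ ⊥) : ∃ j, b j = x := by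
  have : Nonempty α := (Nat.card_pos_iff.1 (by rw [hcard]; exact n.succ_pos)).1
  have hsteps : (π 0).ncard = (π (Fin.last n)).ncard + n :=
    Fin.apply_zero_eq_apply_last_add (f := fun t => (π t).ncard) fun j =>
      (hmerge j).ncard_add_one (hπ _)
  have hfirst : (π 0).ncard = Nat.card α := by
    have := (hπ 0).ncard_le
    have := (hπ (Fin.last n)).one_le_ncard
    omega
  have hlast : (π (Fin.last n)).ncard = 1 := by omega
  obtain ⟨j, hj, hjsucc⟩ := Fin.exists_castSucc_and_not_succ (p := fun t => blockMin (π t) x = x)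
    ((hπ 0).blockMin_eq_self hfirst x) (by simpa [(hπ _).blockMin_eq_bot hlast] using hx.symm)
  have hbj := (hmerge j).blockMin_eq_of_ne (hπ _) (hπ _) (ha j) (hb j) (hab j) (x := x)
    (by rwa [hj])
  exact ⟨j, hbj.symm.trans hj⟩

-- The elements `1, …, n + 1` are modelled by `Fin (n + 1)`, with `x` standing for `x + 1`.
theorem stanley_labels_isParkingFunction_general (n : ℕ)
    (π : Fin (n + 1) → Set (Set (Fin (n + 1))))
    (hpart : ∀ j, Setoid.IsPartition (π j))
    (A B : Fin n → Set (Fin (n + 1))) (a b g : Fin n → Fin (n + 1))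
    (hA : ∀ j, A j ∈ π j.castSucc) (hB : ∀ j, B j ∈ π j.castSucc)
    (hAB : ∀ j, A j ≠ B j)
    (hmerge : ∀ j, π j.succ = (π j.castSucc \ {A j, B j}) ∪ {A j ∪ B j})
    (ha : ∀ j, IsLeast (A j) (a j)) (hb : ∀ j, IsLeast (B j) (b j))
    (hab : ∀ j, a j < b j)
    (hg : ∀ j, IsGreatest {i | i ∈ A j ∧ i < b j} (g j)) :
    IsParkingFunction n (fun j => (g j : ℕ) + 1) := by
  have hstep : ∀ j, IsMerge (π j.castSucc) (π j.succ) (A j) (B j) :=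
    fun j => ⟨hA j, hB j, hAB j, hmerge j⟩
  refine isParkingFunction_of_le_of_subset_range (β := fun j => (b j : ℕ)) (fun _ => by omega)
    (fun j => (hg j).1.2) (fun j => Fin.is_le _) fun v hv => ?_
  obtain ⟨j, hj⟩ := exists_right_min_eq_of_ne_bot (by simp) hpart hstep ha hb
    (fun j => (hab j).le) (x := ⟨v, Nat.lt_succ_of_le hv.2⟩)
    (by rw [Ne, bot_eq_zero, Fin.ext_iff]; exact Nat.one_le_iff_ne_zero.1 hv.1)
  exact ⟨j, by simp [hj]⟩

/-- Let `π 0 < π 1 < ⋯ < π n` be a maximal chain of `NC_{n+1}`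
(the elements of `{1, …, n+1}` are modelled by `Fin (n+1)`, with `x` standing for
`x + 1`), so that for each `j` the partition `π j.succ` is obtained from `π j.castSucc`
by merging two of its blocks `A j` and `B j`, where `min (A j) = a j < b j = min (B j)`.
Let `g j = max { i ∈ A j : i < min (B j) }` and let `α j ∈ {1, …, n+1}` be the
corresponding label `(g j) + 1`.  Then `α` is a parking function of length `n`. -/
theorem stanley_labels_isParkingFunction (n : ℕ) (hn : 0 < n)
    (π : Fin (n + 1) → Set (Set (Fin (n + 1))))
    (hpart : ∀ j, Setoid.IsPartition (π j)) (hnc : ∀ j, Noncrossing (π j))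
    (A B : Fin n → Set (Fin (n + 1))) (a b g : Fin n → Fin (n + 1))
    (hA : ∀ j, A j ∈ π j.castSucc) (hB : ∀ j, B j ∈ π j.castSucc)
    (hAB : ∀ j, A j ≠ B j)
    (hmerge : ∀ j, π j.succ = (π j.castSucc \ {A j, B j}) ∪ {A j ∪ B j})
    (ha : ∀ j, IsLeast (A j) (a j)) (hb : ∀ j, IsLeast (B j) (b j))
    (hab : ∀ j, a j < b j)
    (hg : ∀ j, IsGreatest {i | i ∈ A j ∧ i < b j} (g j)) :
    IsParkingFunction n (fun j => (g j : ℕ) + 1) :=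
  stanley_labels_isParkingFunction_general n π hpart A B a b g hA hB hAB hmerge ha hb hab hg
end

section
/- For every positive integer n and every k ∈ {1, …, n}, any rearrangement of the sequence α^{(k)} = (1, …, 1, k+1, k+2, …, n) (with k ones) is a parking function of length n; moreover, if α is such a rearrangement and α_i > 1 for some index i, then the sequence obtained from α by replacing α_i with α_i + 1 is not a parking function of length n. -/
/-- The sequence `α⁽ᵏ⁾ = (1, …, 1, k+1, k+2, …, n)` with `k` ones (indexed by `Fin n`,
so position `i` holds `1` if `i < k` and `i + 1` otherwise). -/
def alphaK (n k : ℕ) : Fin n → ℕ := fun i => if (i : ℕ) < k then 1 else (i : ℕ) + 1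

/-!
For `1 ≤ m ≤ n`, the entries of `α⁽ᵏ⁾` that are at most `m` are exactly those in the first
`max k m` positions. Counting entries is invariant under rearrangement, so every rearrangement
passes the parking test, and it passes it with equality at every value `v = i + 1 > 1` that
occurs in it. Raising that entry to `v + 1` drops the count at `v` to `v - 1`.
-/

open Finset

lemma card_filter_comp_perm {ι : Type*} [Fintype ι] (σ : Equiv.Perm ι) (p : ι → Prop)
    [DecidablePred p] : #{j | p (σ j)} = #{j | p j} := by
  rw [← map_univ_equiv σ.symm, filter_map, card_map]
  simp

section ParkingFunction

variable {n : ℕ}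

lemma IsParkingFunction.comp_perm {α : Fin n → ℕ} (hα : IsParkingFunction n α)
    (σ : Equiv.Perm (Fin n)) : IsParkingFunction n (α ∘ σ) :=
  ⟨fun j => hα.1 (σ j), fun i hi => by
    simpa only [Function.comp_apply, card_filter_comp_perm σ fun j => α j ≤ i] using hα.2 i hi⟩

lemma not_isParkingFunction_update {α : Fin n → ℕ} {i : Fin n} {v w : ℕ}
    (hv : v ∈ Icc 1 n) (hcard : #{j | α j ≤ v} = v) (hi : α i ≤ v) (hw : v < w) :
    ¬ IsParkingFunction n (Function.update α i w) := by
  intro hpark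
  have hfilter :
      univ.filter (fun j => Function.update α i w j ≤ v) = (univ.filter (α · ≤ v)).erase i := by
    ext j
    rcases eq_or_ne j i with rfl | hj
    · simpa using hw
    · simp [hj]
  have hle := hpark.2 v hv
  rw [hfilter, card_erase_of_mem (by simpa using hi), hcard] at hle
  have := (mem_Icc.1 hv).1
  omega

end ParkingFunction

section AlphaK

variable {n k : ℕ}

lemma alphaK_mem_Icc (i : Fin n) : alphaK n k i ∈ Icc 1 n := by
  have := i.isLt
  simp only [alphaK, mem_Icc]
  split <;> omega

lemma card_alphaK_le (hk : k ≤ n) {m : ℕ} (hm : 1 ≤ m) (hmn : m ≤ n) :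
    #{i | alphaK n k i ≤ m} = max k m := by
  have hfilter :
      univ.filter (alphaK n k · ≤ m) = univ.filter fun i : Fin n => (i : ℕ) < max k m := by
    ext i
    simp only [mem_filter, mem_univ, true_and]
    unfold alphaK
    split <;> omega
  rw [hfilter, Fin.card_filter_val_lt]
  omega

lemma isParkingFunction_alphaK (hk : k ≤ n) : IsParkingFunction n (alphaK n k) :=
  ⟨alphaK_mem_Icc, fun m hm => by
    rw [card_alphaK_le hk (mem_Icc.1 hm).1 (mem_Icc.1 hm).2]
    exact le_max_right k m⟩

lemma card_alphaK_le_alphaK (hk : k ≤ n) {i : Fin n} (hi : 1 < alphaK n k i) :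
    #{j | alphaK n k j ≤ alphaK n k i} = alphaK n k i := by
  have hki : k ≤ i := by
    by_contra h
    simp [alphaK, not_le.1 h] at hi
  have hval : alphaK n k i = i + 1 := by simp [alphaK, not_lt.2 hki]
  rw [card_alphaK_le hk (by omega) (by omega), hval]
  omega

end AlphaK

theorem alphaK_rearrangement_vertex_general (n k : ℕ) (hk : k ∈ Finset.Icc 1 n)
    (σ : Equiv.Perm (Fin n)) :
    IsParkingFunction n (fun i => alphaK n k (σ i)) ∧
      ∀ i : Fin n, 1 < alphaK n k (σ i) →
        ¬ IsParkingFunction n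
          (Function.update (fun i => alphaK n k (σ i)) i (alphaK n k (σ i) + 1)) := by
  have hkn : k ≤ n := (mem_Icc.1 hk).2
  refine ⟨(isParkingFunction_alphaK hkn).comp_perm σ, fun i hi => ?_⟩
  refine not_isParkingFunction_update (alphaK_mem_Icc _) ?_ le_rfl (Nat.lt_succ_self _)
  rw [card_filter_comp_perm σ fun j => alphaK n k j ≤ alphaK n k (σ i)]
  exact card_alphaK_le_alphaK hkn hi

/-- For every positive integer `n` and every `k ∈ {1, …, n}`, any
rearrangement of `α⁽ᵏ⁾` is a parking function of length `n`; moreover, if `α` is such a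
rearrangement and `α i > 1`, then replacing `α i` by `α i + 1` yields a sequence that is
not a parking function of length `n`. -/
theorem alphaK_rearrangement_vertex (n k : ℕ) (hn : 0 < n) (hk : k ∈ Finset.Icc 1 n)
    (σ : Equiv.Perm (Fin n)) :
    IsParkingFunction n (fun i => alphaK n k (σ i)) ∧
      ∀ i : Fin n, 1 < alphaK n k (σ i) →
        ¬ IsParkingFunction n
          (Function.update (fun i => alphaK n k (σ i)) i (alphaK n k (σ i) + 1)) :=
  alphaK_rearrangement_vertex_general n k hk σ
end

section
/- For every positive integer n, the number of extreme points of the parking function polytope 𝒫F_n equals Σ_{k=1}^{n} n!/k!, i.e., n!·(1/1! + 1/2! + ⋯ + 1/n!). -/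
/-- The set of parking functions of length `n`, regarded as points of `ℝⁿ`. -/
def parkingFunctionPoints (n : ℕ) : Set (Fin n → ℝ) :=
  {x | ∃ α : Fin n → ℕ, IsParkingFunction n α ∧ x = fun i => (α i : ℝ)}

/-- The parking function polytope `𝒫F_n ⊆ ℝⁿ`, the convex hull of the set of all
parking functions of length `n`. -/
def parkingFunctionPolytope (n : ℕ) : Set (Fin n → ℝ) :=
  convexHull ℝ (parkingFunctionPoints n)


/-!
Every point of `𝒫F_n` satisfies `1 ≤ x j` and `∑ j ∈ T, x j ≤ n + (n - 1) + ⋯ + (n - #T + 1)`.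
A parking function `α` with an entry `α j ≥ 2` such that more than `α j` entries are `≤ α j` is
the midpoint of `α ± e_j`, so it is not a vertex. The remaining parking functions are exactly
the rearrangements of `(1, …, 1, k + 1, …, n)` with `k ≥ 1` ones; each of them is the only point
of `𝒫F_n` on which suitable inequalities of both kinds are tight, so it is a vertex. Such a
rearrangement is determined by where it puts `n, n - 1, …, k + 1`, an injection
`Fin (n - k) ↪ Fin n`, and there are `n! / k!` of those.
-/

open Finset

namespace IsParkingFunction

variable {n : ℕ} {α : Fin n → ℕ}

theorem one_le (hα : IsParkingFunction n α) (j : Fin n) : 1 ≤ α j :=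
  (mem_Icc.1 (hα.1 j)).1

theorem le (hα : IsParkingFunction n α) (j : Fin n) : α j ≤ n :=
  (mem_Icc.1 (hα.1 j)).2

theorem le_card_filter_le (hα : IsParkingFunction n α) {i : ℕ} (hi : i ≤ n) :
    i ≤ #{j | α j ≤ i} := by
  rcases Nat.eq_zero_or_pos i with rfl | hi0
  · exact Nat.zero_le _
  · exact hα.2 i (mem_Icc.2 ⟨hi0, hi⟩)

theorem card_filter_le_apply_add_le (hα : IsParkingFunction n α) {u : ℕ} (hu : u ≤ n + 1) :
    #{j | u ≤ α j} + u ≤ n + 1 := by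
  have hsub : ({j | u ≤ α j} : Finset (Fin n)) ⊆ ({j | α j ≤ u - 1} : Finset (Fin n))ᶜ :=
    fun j => by
    have := hα.one_le j
    simp only [mem_compl, mem_filter, mem_univ, true_and]; omega
  have := (card_le_card hsub).trans_eq (card_compl _)
  have := hα.le_card_filter_le (i := u - 1) (by omega)
  simp only [Fintype.card_fin] at *
  omega

theorem sum_le (hα : IsParkingFunction n α) (T : Finset (Fin n)) :
    ∑ j ∈ T, α j ≤ ∑ i ∈ range #T, (n - i) := by
  classical
  induction T using Finset.induction_on_min_value α with
  | empty => simp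
  | insert a T haT hmin ih =>
    have hcount : insert a T ⊆ ({j | α a ≤ α j} : Finset (Fin n)) := by
      intro j hj
      rcases mem_insert.1 hj with rfl | hj
      · simp
      · simpa using hmin j hj
    have := (card_insert_of_notMem haT).symm.trans_le (card_le_card hcount)
    have := hα.card_filter_le_apply_add_le (u := α a) (by linarith [hα.le a])
    rw [sum_insert haT, card_insert_of_notMem haT, sum_range_succ]
    omega

theorem of_le {β : Fin n → ℕ} (hα : IsParkingFunction n α) (hβ : ∀ j, 1 ≤ β j)
    (hβα : β ≤ α) : IsParkingFunction n β :=
  ⟨fun j => mem_Icc.2 ⟨hβ j, (hβα j).trans (hα.le j)⟩, fun i hi =>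
    (hα.2 i hi).trans <| card_le_card fun j => by
      simp only [mem_filter, mem_univ, true_and]; exact (hβα j).trans⟩

theorem update_pred (hα : IsParkingFunction n α) {j : Fin n} (hj : 2 ≤ α j) :
    IsParkingFunction n (Function.update α j (α j - 1)) := by
  refine hα.of_le (fun j' => ?_) (fun j' => ?_) <;> rcases eq_or_ne j' j with rfl | h <;>
    (simp [*, hα.one_le]; try omega)

theorem update_succ (hα : IsParkingFunction n α) {j : Fin n}
    (hj : α j < #{j' | α j' ≤ α j}) :
    IsParkingFunction n (Function.update α j (α j + 1)) := by
  have hlt : α j < n := hj.trans_le ((card_filter_le _ _).trans_eq (by simp))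
  refine ⟨fun j' => ?_, fun i hi => ?_⟩
  · rcases eq_or_ne j' j with rfl | h
    · simp only [Function.update_self, mem_Icc]; omega
    · simpa [h] using hα.1 j'
  · by_cases hij : i = α j
    · subst hij
      have hsub : ({j' | α j' ≤ α j} : Finset (Fin n)).erase j ⊆
          ({j' | Function.update α j (α j + 1) j' ≤ α j} : Finset (Fin n)) := by
        intro j' hj'
        simp_all
      have := (pred_card_le_card_erase (a := j)).trans (card_le_card hsub)
      omega
    · refine (hα.2 i hi).trans (card_le_card fun j' hj' => ?_)
      rcases eq_or_ne j' j with rfl | h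
      · simp only [mem_filter, mem_univ, true_and, Function.update_self] at hj' ⊢; omega
      · simpa [h] using hj'

end IsParkingFunction

theorem LinearMap.eq_of_isMaxOn_of_mem_openSegment {𝕜 E : Type*} [Field 𝕜] [LinearOrder 𝕜]
    [IsStrictOrderedRing 𝕜] [AddCommGroup E] [Module 𝕜 E] (f : E →ₗ[𝕜] 𝕜) {K : Set E}
    {x y z : E} (hf : IsMaxOn f K x) (hy : y ∈ K) (hz : z ∈ K) (hx : x ∈ openSegment 𝕜 y z) :
    f y = f x :=
  (hf hy).antisymm <|
    (f.convexOn convex_univ).le_left_of_right_le (Set.mem_univ y) (Set.mem_univ z) hx (hf hz)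

section Polytope

variable {n : ℕ}

theorem mem_parkingFunctionPolytope {α : Fin n → ℕ} (hα : IsParkingFunction n α) :
    (fun i => (α i : ℝ)) ∈ parkingFunctionPolytope n :=
  subset_convexHull ℝ _ ⟨α, hα, rfl⟩

theorem LinearMap.apply_le_of_mem_parkingFunctionPolytope (f : (Fin n → ℝ) →ₗ[ℝ] ℝ) {c : ℝ}
    (hf : ∀ α, IsParkingFunction n α → f (fun i => (α i : ℝ)) ≤ c) {x : Fin n → ℝ}
    (hx : x ∈ parkingFunctionPolytope n) : f x ≤ c :=
  convexHull_min (by rintro _ ⟨α, hα, rfl⟩; exact hf α hα) (convex_halfSpace_le f.isLinear c) hx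

theorem one_le_of_mem_parkingFunctionPolytope {x : Fin n → ℝ}
    (hx : x ∈ parkingFunctionPolytope n) (j : Fin n) : 1 ≤ x j := by
  have := (-LinearMap.proj j).apply_le_of_mem_parkingFunctionPolytope (c := -1)
    (fun α hα => by simpa using (Nat.one_le_cast.2 (hα.one_le j) : (1 : ℝ) ≤ α j)) hx
  simpa using this

theorem sum_le_of_mem_parkingFunctionPolytope {x : Fin n → ℝ}
    (hx : x ∈ parkingFunctionPolytope n) (T : Finset (Fin n)) :
    ∑ j ∈ T, x j ≤ ((∑ i ∈ range #T, (n - i) : ℕ) : ℝ) := by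
  have := (∑ j ∈ T, LinearMap.proj j : (Fin n → ℝ) →ₗ[ℝ] ℝ).apply_le_of_mem_parkingFunctionPolytope
    (fun α hα => by simpa using (Nat.cast_le (α := ℝ)).2 (hα.sum_le T)) hx
  simpa using this

variable {x y z : Fin n → ℝ}

theorem apply_eq_one_of_mem_openSegment (hy : y ∈ parkingFunctionPolytope n)
    (hz : z ∈ parkingFunctionPolytope n) (hx : x ∈ openSegment ℝ y z) {j : Fin n}
    (hxj : x j = 1) : y j = 1 := by
  have := (-LinearMap.proj j).eq_of_isMaxOn_of_mem_openSegment
    (fun w hw => by simpa [hxj] using one_le_of_mem_parkingFunctionPolytope hw j) hy hz hx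
  simpa [hxj] using this

theorem sum_eq_of_mem_openSegment (hy : y ∈ parkingFunctionPolytope n)
    (hz : z ∈ parkingFunctionPolytope n) (hx : x ∈ openSegment ℝ y z) {T : Finset (Fin n)}
    (hT : ∑ j ∈ T, x j = ((∑ i ∈ range #T, (n - i) : ℕ) : ℝ)) :
    ∑ j ∈ T, y j = ∑ j ∈ T, x j := by
  have := (∑ j ∈ T, LinearMap.proj j : (Fin n → ℝ) →ₗ[ℝ] ℝ).eq_of_isMaxOn_of_mem_openSegment
    (fun w hw => by simpa [hT] using sum_le_of_mem_parkingFunctionPolytope hw T) hy hz hx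
  simpa using this

end Polytope

theorem card_filter_le_apply_le_of_mem_extremePoints {n : ℕ} {α : Fin n → ℕ}
    (hα : IsParkingFunction n α)
    (hext : (fun i => (α i : ℝ)) ∈ (parkingFunctionPolytope n).extremePoints ℝ) {j : Fin n}
    (hj : 2 ≤ α j) : #{j' | α j' ≤ α j} ≤ α j := by
  by_contra! hlt
  have hmid : (fun i => (α i : ℝ)) ∈ openSegment ℝ
      (fun i => (Function.update α j (α j + 1) i : ℝ))
      (fun i => (Function.update α j (α j - 1) i : ℝ)) := by
    refine ⟨1 / 2, 1 / 2, by norm_num, by norm_num, by norm_num, funext fun i => ?_⟩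
    rcases eq_or_ne i j with rfl | hij
    · simp [Nat.cast_sub (by omega : 1 ≤ α i)]; ring
    · simp [hij]; ring
  have := congrFun (hext.2 (mem_parkingFunctionPolytope (hα.update_succ hlt))
    (mem_parkingFunctionPolytope (hα.update_pred hj)) hmid) j
  simp at this

noncomputable def parkingVertex (n k : ℕ) (e : Fin (n - k) ↪ Fin n) : Fin n → ℕ :=
  Function.extend e (fun t => n - t) 1

namespace parkingVertex

variable {n k : ℕ} (e : Fin (n - k) ↪ Fin n)

theorem apply_embedding (t : Fin (n - k)) : parkingVertex n k e (e t) = n - t :=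
  e.injective.extend_apply _ _ t

theorem apply_of_notMem_range {j : Fin n} (hj : j ∉ Set.range e) : parkingVertex n k e j = 1 :=
  Function.extend_apply' _ _ j hj

theorem isParkingFunction : IsParkingFunction n (parkingVertex n k e) := by
  refine ⟨fun j => mem_Icc.2 ?_, fun i hi => ?_⟩
  · by_cases hj : j ∈ Set.range e
    · obtain ⟨t, rfl⟩ := hj
      rw [apply_embedding]
      have := t.isLt
      omega
    · rw [apply_of_notMem_range e hj]
      exact ⟨le_rfl, j.pos⟩
  · rw [mem_Icc] at hi
    have hsub : ({j | parkingVertex n k e j ≤ i} : Finset (Fin n))ᶜ ⊆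
        ({t : Fin (n - k) | t < n - i} : Finset _).map e := by
      intro j hj
      simp only [mem_compl, mem_filter, mem_univ, true_and, not_le] at hj
      by_cases hjr : j ∈ Set.range e
      · obtain ⟨t, rfl⟩ := hjr
        rw [apply_embedding] at hj
        simp only [mem_map, mem_filter, mem_univ, true_and]
        exact ⟨t, by omega, rfl⟩
      · rw [apply_of_notMem_range e hjr] at hj
        omega
    have := (card_le_card hsub).trans_eq (card_map e)
    rw [card_compl, Fin.card_filter_val_lt, Fintype.card_fin] at this
    omega

theorem card_map_Iio (t : Fin (n - k)) : #((Iio t).map e) = t := by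
  rw [card_map, Fin.card_Iio]

theorem sum_map_Iio (t : Fin (n - k)) :
    ∑ j ∈ (Iio t).map e, parkingVertex n k e j = ∑ i ∈ range t, (n - i) := by
  rw [sum_map, ← Nat.Iio_eq_range, ← Fin.map_valEmbedding_Iio, sum_map]
  exact sum_congr rfl fun s _ => apply_embedding e s

theorem map_Iic (t : Fin (n - k)) : (Iic t).map e = insert (e t) ((Iio t).map e) := by
  rw [← Iio_insert, map_insert]

theorem card_map_Iic (t : Fin (n - k)) : #((Iic t).map e) = t + 1 := by
  rw [card_map, Fin.card_Iic]

theorem sum_map_Iic (t : Fin (n - k)) :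
    ∑ j ∈ (Iic t).map e, parkingVertex n k e j = ∑ i ∈ range (t + 1), (n - i) := by
  rw [map_Iic, sum_insert (by simp), apply_embedding, sum_map_Iio, sum_range_succ, add_comm]

theorem mem_extremePoints :
    (fun j => (parkingVertex n k e j : ℝ)) ∈ (parkingFunctionPolytope n).extremePoints ℝ := by
  refine ⟨mem_parkingFunctionPolytope (isParkingFunction e), fun y hy z hz hx => funext fun j => ?_⟩
  by_cases hj : j ∈ Set.range e
  · -- `y (e t)` is the difference of the tight sums over `e '' Iic t` and `e '' Iio t`.
    obtain ⟨t, rfl⟩ := hj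
    have hnot : e t ∉ (Iio t).map e := by simp
    have hIio := sum_eq_of_mem_openSegment hy hz hx (T := (Iio t).map e) (by
      rw [card_map_Iio]; exact_mod_cast sum_map_Iio e t)
    have hIic := sum_eq_of_mem_openSegment hy hz hx (T := (Iic t).map e) (by
      rw [card_map_Iic]; exact_mod_cast sum_map_Iic e t)
    rw [map_Iic, sum_insert hnot, sum_insert hnot] at hIic
    linarith
  · have hxj : (parkingVertex n k e j : ℝ) = 1 := by simp [apply_of_notMem_range e hj]
    rw [hxj]
    exact apply_eq_one_of_mem_openSegment hy hz hx hxj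

theorem card_filter_eq_one (hk : 1 ≤ k) (hkn : k ≤ n) :
    #{j | parkingVertex n k e j = 1} = k := by
  have hones : ({j | parkingVertex n k e j = 1} : Finset (Fin n)) = (univ.map e)ᶜ := by
    ext j
    simp only [mem_filter, mem_univ, true_and, mem_compl, mem_map]
    constructor
    · rintro hj ⟨t, rfl⟩
      rw [apply_embedding] at hj
      have := t.isLt
      omega
    · exact apply_of_notMem_range e
  rw [hones, card_compl, card_map, card_univ, Fintype.card_fin, Fintype.card_fin]
  omega

theorem sigma_injective :
    Function.Injective fun d : Σ k : Icc 1 n, Fin (n - k) ↪ Fin n => parkingVertex n d.1 d.2 := by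
  rintro ⟨k₁, e₁⟩ ⟨k₂, e₂⟩ h
  simp only at h
  have hk₁ := mem_Icc.1 k₁.2
  have hk₂ := mem_Icc.1 k₂.2
  obtain rfl : k₁ = k₂ := Subtype.ext <| by
    rw [← card_filter_eq_one e₁ hk₁.1 hk₁.2, ← card_filter_eq_one e₂ hk₂.1 hk₂.2, h]
  obtain rfl : e₁ = e₂ := Function.Embedding.ext fun t => by
    have ht := apply_embedding e₁ t
    have := t.isLt
    rw [h] at ht
    by_cases hr : e₁ t ∈ Set.range e₂
    · obtain ⟨s, hs⟩ := hr
      rw [← hs] at ht ⊢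
      rw [apply_embedding] at ht
      have := s.isLt
      exact congrArg e₂ (Fin.ext (by omega))
    · rw [apply_of_notMem_range e₂ hr] at ht
      omega
  rfl

end parkingVertex

section Tight

variable {n : ℕ} {α : Fin n → ℕ}

theorem eq_of_apply_eq_of_tight (hα : IsParkingFunction n α)
    (htight : ∀ j, 2 ≤ α j → #{j' | α j' ≤ α j} ≤ α j) {j₁ j₂ : Fin n} (hj₁ : 2 ≤ α j₁)
    (h : α j₁ = α j₂) : j₁ = j₂ := by
  by_contra hne
  have hsub : insert j₁ (insert j₂ ({j | α j ≤ α j₁ - 1} : Finset (Fin n))) ⊆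
      ({j | α j ≤ α j₁} : Finset (Fin n)) := by
    intro j hj
    simp only [mem_insert, mem_filter, mem_univ, true_and] at hj ⊢
    rcases hj with rfl | rfl | hj <;> omega
  have := card_le_card hsub
  rw [card_insert_of_notMem (by simp [hne]; omega), card_insert_of_notMem (by simp; omega)] at this
  have := hα.le_card_filter_le (i := α j₁ - 1) (by have := hα.le j₁; omega)
  have := htight j₁ hj₁
  omega

theorem card_filter_eq_one_lt_of_tight (htight : ∀ j, 2 ≤ α j → #{j' | α j' ≤ α j} ≤ α j)
    {j : Fin n} (hj : 2 ≤ α j) : #{j' | α j' = 1} < α j := by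
  have hsub : insert j ({j' | α j' = 1} : Finset (Fin n)) ⊆
      ({j' | α j' ≤ α j} : Finset (Fin n)) := by
    intro j' hj'
    simp only [mem_insert, mem_filter, mem_univ, true_and] at hj' ⊢
    rcases hj' with rfl | hj' <;> omega
  have := card_le_card hsub
  rw [card_insert_of_notMem (by simp; omega)] at this
  have := htight j hj
  omega

theorem exists_apply_eq_of_tight (hα : IsParkingFunction n α)
    (htight : ∀ j, 2 ≤ α j → #{j' | α j' ≤ α j} ≤ α j) {v : ℕ} (hkv : #{j | α j = 1} < v)
    (hvn : v ≤ n) : ∃ j, α j = v := by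
  have hcard : n - #{j | α j = 1} ≤ #{j | 2 ≤ α j} := by
    have hsub : ({j | α j = 1} : Finset (Fin n))ᶜ ⊆
        ({j | 2 ≤ α j} : Finset (Fin n)) := fun j hj => by
      have := hα.one_le j
      simp only [mem_compl, mem_filter, mem_univ, true_and] at hj ⊢
      omega
    have := card_le_card hsub
    rw [card_compl, Fintype.card_fin] at this
    omega
  obtain ⟨j, -, hj⟩ := surj_on_of_inj_on_of_card_le (s := {j | 2 ≤ α j})
    (t := Ioc #{j | α j = 1} n) (fun j _ => α j)
    (fun j hj => mem_Ioc.2 ⟨card_filter_eq_one_lt_of_tight htight (mem_filter.1 hj).2, hα.le j⟩)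
    (fun j₁ j₂ hj₁ _ h => eq_of_apply_eq_of_tight hα htight (mem_filter.1 hj₁).2 h)
    (by rwa [Nat.card_Ioc]) v (mem_Ioc.2 ⟨hkv, hvn⟩)
  exact ⟨j, hj.symm⟩

theorem exists_parkingVertex_eq_of_tight (hn : 0 < n) (hα : IsParkingFunction n α)
    (htight : ∀ j, 2 ≤ α j → #{j' | α j' ≤ α j} ≤ α j) :
    ∃ k ∈ Icc 1 n, ∃ e : Fin (n - k) ↪ Fin n, parkingVertex n k e = α := by
  set k := #{j | α j = 1}
  have hk₁ : 1 ≤ k := (hα.2 1 (mem_Icc.2 ⟨le_rfl, hn⟩)).trans_eq <| congrArg card <|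
    filter_congr fun j _ => by have := hα.one_le j; omega
  have hkn : k ≤ n := (card_filter_le _ _).trans_eq (by simp)
  choose e he using fun t : Fin (n - k) =>
    exists_apply_eq_of_tight hα htight (v := n - t) (by omega) (by omega)
  have he_inj : Function.Injective e := fun t₁ t₂ h => by
    have h₁ := he t₁
    rw [h, he t₂] at h₁
    omega
  refine ⟨k, mem_Icc.2 ⟨hk₁, hkn⟩, ⟨e, he_inj⟩, funext fun j => ?_⟩
  by_cases hj : j ∈ Set.range e
  · obtain ⟨t, rfl⟩ := hj
    exact (parkingVertex.apply_embedding ⟨e, he_inj⟩ t).trans (he t).symm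
  · rw [parkingVertex.apply_of_notMem_range ⟨e, he_inj⟩ hj]
    by_contra hne
    have h2 : 2 ≤ α j := by have := hα.one_le j; omega
    have hkj := card_filter_eq_one_lt_of_tight htight h2
    have hjn := hα.le j
    set t : Fin (n - k) := ⟨n - α j, by omega⟩
    have ht : (t : ℕ) = n - α j := rfl
    exact hj ⟨t, eq_of_apply_eq_of_tight hα htight (by rw [he, ht]; omega) (by rw [he, ht]; omega)⟩

end Tight

theorem extremePoints_parkingFunctionPolytope {n : ℕ} (hn : 0 < n) :
    (parkingFunctionPolytope n).extremePoints ℝ = Set.range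
      fun d : Σ k : Icc 1 n, Fin (n - k) ↪ Fin n => fun j => (parkingVertex n d.1 d.2 j : ℝ) := by
  refine Set.Subset.antisymm (fun x hx => ?_) ?_
  · obtain ⟨α, hα, rfl⟩ := extremePoints_convexHull_subset hx
    obtain ⟨k, hk, e, rfl⟩ := exists_parkingVertex_eq_of_tight hn hα fun j hj =>
      card_filter_le_apply_le_of_mem_extremePoints hα hx hj
    exact ⟨⟨⟨k, hk⟩, e⟩, rfl⟩
  · rintro _ ⟨d, rfl⟩
    exact parkingVertex.mem_extremePoints d.2

theorem Nat.card_sigma_Icc_embedding (n : ℕ) :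
    Nat.card (Σ k : Icc 1 n, Fin (n - k) ↪ Fin n) = ∑ k ∈ Icc 1 n, n.factorial / k.factorial := by
  rw [Nat.card_sigma, ← sum_coe_sort (Icc 1 n)]
  refine sum_congr rfl fun k _ => ?_
  rw [Nat.card_eq_fintype_card, Fintype.card_embedding_eq, Fintype.card_fin, Fintype.card_fin,
    Nat.descFactorial_eq_div (Nat.sub_le n k), Nat.sub_sub_self (mem_Icc.1 k.2).2]

/-- The number of extreme points (vertices) of the parking function
polytope `𝒫F_n` equals `∑_{k=1}^{n} n!/k! = n!·(1/1! + 1/2! + ⋯ + 1/n!)`. -/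
theorem card_extremePoints_parkingFunctionPolytope (n : ℕ) (hn : 0 < n) :
    Nat.card ((parkingFunctionPolytope n).extremePoints ℝ) =
      ∑ k ∈ Finset.Icc 1 n, n.factorial / k.factorial := by
  have hinj : Function.Injective fun d : Σ k : Icc 1 n, Fin (n - k) ↪ Fin n =>
      fun j => (parkingVertex n d.1 d.2 j : ℝ) :=
    Nat.cast_injective.comp_left.comp parkingVertex.sigma_injective
  rw [extremePoints_parkingFunctionPolytope hn, Nat.card_range_of_injective hinj,
    Nat.card_sigma_Icc_embedding]
end
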